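/- arXiv:1901.04123 — 3 statements merged into one kernel-verified Lean document; each statement's English description precedes it below -/
import Mathlib

section
/- In the two-dimensional invariant subspace spanned by the orthonormal vectors α (unmarked superposition) and β (marked superposition), the Grover operator G = (2|ψ⟩⟨ψ| - I)·O acts as the rotation matrix [[cos θ, -sin θ],[sin θ, cos θ]], where cos(θ/2) = √((N-M)/N) and the oracle O negates β and fixes α. -/
set_option maxHeartbeats 1000000


open scoped ComplexInnerProductSpace in
/-- Grover operator as a rotation: on the plane spanned by the orthonormal
vectors `α` (unmarked superposition) and `β` (marked superposition), the Grover
operator `G = (2|ψ⟩⟨ψ| - I)∘O`, where the oracle `O` negates marked basis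
vectors, acts with matrix `[[cos θ, -sin θ],[sin θ, cos θ]]` in the ordered
basis `(α, β)`, where `cos(θ/2) = √((N-M)/N)`. -/
theorem grover_operator_is_rotation
    (N M : ℕ) (S : Finset (Fin N)) (hS : S.card = M) (hM0 : 0 < M) (hMN : M < N)
    (ψ α β : EuclideanSpace ℂ (Fin N))
    (hψ : ∀ x, ψ x = 1 / (Real.sqrt N : ℂ))
    (hα : ∀ x, α x = if x ∈ S then 0 else 1 / (Real.sqrt ((N : ℝ) - M) : ℂ))
    (hβ : ∀ x, β x = if x ∈ S then 1 / (Real.sqrt M : ℂ) else 0)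
    (θ : ℝ) (hθ₁ : Real.cos (θ / 2) = Real.sqrt (((N : ℝ) - M) / N))
    (hθ₂ : Real.sin (θ / 2) = Real.sqrt ((M : ℝ) / N))
    (hθ₃ : θ / 2 ∈ Set.Icc 0 (Real.pi / 2))
    (O G : EuclideanSpace ℂ (Fin N) → EuclideanSpace ℂ (Fin N))
    (hO : ∀ v, ∀ x, O v x = if x ∈ S then -(v x) else v x)
    (hG : ∀ v, G v = (2 : ℂ) • (⟪ψ, O v⟫ • ψ) - O v) :
    G α = (Real.cos θ : ℂ) • α + (Real.sin θ : ℂ) • β ∧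
    G β = -(Real.sin θ : ℂ) • α + (Real.cos θ : ℂ) • β := by
  set c := Real.cos (θ / 2) with hcdef
  set s := Real.sin (θ / 2) with hsdef
  have hMN' : (M:ℝ) < N := by exact_mod_cast hMN
  have hN0 : (0:ℝ) < N := lt_of_le_of_lt (Nat.cast_nonneg M) hMN'
  have hM0' : (0:ℝ) < M := by exact_mod_cast hM0
  have hNM0 : (0:ℝ) < (N:ℝ) - M := by linarith
  have hsN : (0:ℝ) < Real.sqrt N := Real.sqrt_pos.mpr hN0
  have hsM : (0:ℝ) < Real.sqrt M := Real.sqrt_pos.mpr hM0'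
  have hsNM : (0:ℝ) < Real.sqrt ((N:ℝ) - M) := Real.sqrt_pos.mpr hNM0
  have hmsNM : Real.sqrt ((N:ℝ) - M) * Real.sqrt ((N:ℝ) - M) = (N:ℝ) - M :=
    Real.mul_self_sqrt hNM0.le
  have hmsM : Real.sqrt (M:ℝ) * Real.sqrt (M:ℝ) = (M:ℝ) :=
    Real.mul_self_sqrt hM0'.le
  have hc : c = Real.sqrt ((N:ℝ) - M) / Real.sqrt N := by
    rw [hθ₁, Real.sqrt_div hNM0.le]
  have hs : s = Real.sqrt M / Real.sqrt N := by
    rw [hθ₂, Real.sqrt_div hM0'.le]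
  -- pointwise expression of ψ
  have hψspan : ψ = (c:ℂ) • α + (s:ℂ) • β := by
    ext x
    have h1 : (Real.sqrt N)⁻¹ = c * (Real.sqrt ((N:ℝ) - M))⁻¹ := by
      rw [hc]; field_simp
    have h2 : (Real.sqrt N)⁻¹ = s * (Real.sqrt (M:ℝ))⁻¹ := by
      rw [hs]; field_simp
    simp only [PiLp.add_apply, PiLp.smul_apply, hψ, hα, hβ, smul_eq_mul]
    by_cases hx : x ∈ S
    · simp only [hx, if_true, mul_zero, zero_add, one_div]
      rw [← Complex.ofReal_inv, ← Complex.ofReal_inv, ← Complex.ofReal_mul, h2]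
    · simp only [hx, if_false, mul_zero, add_zero, one_div]
      rw [← Complex.ofReal_inv, ← Complex.ofReal_inv, ← Complex.ofReal_mul, h1]
  -- oracle action
  have hOα : O α = α := by
    ext x
    rw [hO, hα]
    by_cases hx : x ∈ S <;> simp [hx, hα]
  have hOβ : O β = -β := by
    ext x
    rw [hO]
    by_cases hx : x ∈ S <;> simp [hx, hβ]
  -- cardinalities
  have hcardc : (Finset.univ.filter (fun x : Fin N => ¬ x ∈ S)).card = N - M := by
    rw [Finset.filter_not, Finset.filter_mem_eq_inter, Finset.univ_inter,
      Finset.card_sdiff_of_subset (Finset.subset_univ S), Finset.card_univ, Fintype.card_fin, hS]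
  have hcardS : (Finset.univ.filter (fun x : Fin N => x ∈ S)).card = M := by
    rw [Finset.filter_mem_eq_inter, Finset.univ_inter, hS]
  -- inner products
  have hinnα : ⟪ψ, α⟫ = (c:ℂ) := by
    have hr : ((N:ℝ) - M) * (Real.sqrt N * Real.sqrt ((N:ℝ) - M))⁻¹ = c := by
      rw [hc]; field_simp; nlinarith [hmsNM]
    calc ⟪ψ, α⟫
        = ∑ x : Fin N, (if x ∈ S then (0:ℂ)
            else (((Real.sqrt N : ℝ) : ℂ) * ((Real.sqrt ((N:ℝ) - M) : ℝ) : ℂ))⁻¹) := by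
          rw [PiLp.inner_apply]
          refine Finset.sum_congr rfl fun x _ => ?_
          simp only [RCLike.inner_apply, hψ, hα]
          by_cases hx : x ∈ S <;>
            simp [hx, map_div₀, Complex.conj_ofReal, mul_inv, one_div, mul_comm]
      _ = ((N - M : ℕ) : ℂ) *
            (((Real.sqrt N : ℝ) : ℂ) * ((Real.sqrt ((N:ℝ) - M) : ℝ) : ℂ))⁻¹ := by
          rw [Finset.sum_ite, Finset.sum_const, Finset.sum_const, smul_zero, zero_add,
            hcardc, nsmul_eq_mul]
      _ = (c:ℂ) := by
          rw [← hr]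
          push_cast [Nat.cast_sub hMN.le]
          ring
  have hinnβ : ⟪ψ, β⟫ = (s:ℂ) := by
    have hr : (M:ℝ) * (Real.sqrt N * Real.sqrt (M:ℝ))⁻¹ = s := by
      rw [hs]; field_simp; nlinarith [hmsM]
    calc ⟪ψ, β⟫
        = ∑ x : Fin N, (if x ∈ S then
            (((Real.sqrt N : ℝ) : ℂ) * ((Real.sqrt (M:ℝ) : ℝ) : ℂ))⁻¹ else (0:ℂ)) := by
          rw [PiLp.inner_apply]
          refine Finset.sum_congr rfl fun x _ => ?_
          simp only [RCLike.inner_apply, hψ, hβ]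
          by_cases hx : x ∈ S <;>
            simp [hx, map_div₀, Complex.conj_ofReal, mul_inv, one_div, mul_comm]
      _ = (M : ℂ) * (((Real.sqrt N : ℝ) : ℂ) * ((Real.sqrt (M:ℝ) : ℝ) : ℂ))⁻¹ := by
          rw [Finset.sum_ite, Finset.sum_const, Finset.sum_const, smul_zero, add_zero,
            hcardS, nsmul_eq_mul]
      _ = (s:ℂ) := by
          rw [← hr]
          push_cast
          ring
  have hcosR : Real.cos θ = 2*c^2 - 1 := by
    have h := Real.cos_sq (θ/2)
    rw [show 2*(θ/2) = θ by ring] at h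
    rw [hcdef]; linarith
  have hsinR : Real.sin θ = 2*s*c := by
    have h := Real.sin_two_mul (θ/2)
    rw [show 2*(θ/2) = θ by ring] at h
    rw [hsdef, hcdef]; linarith
  have hpythR : s^2 + c^2 = 1 := by
    rw [hsdef, hcdef]; exact Real.sin_sq_add_cos_sq (θ/2)
  have hcosR2 : Real.cos θ = 1 - 2*s^2 := by rw [hcosR]; nlinarith [hpythR]
  have hcos : (Real.cos θ : ℂ) = 2*(c:ℂ)^2 - 1 := by rw [hcosR]; push_cast; ring
  have hcos2 : (Real.cos θ : ℂ) = 1 - 2*(s:ℂ)^2 := by rw [hcosR2]; push_cast; ring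
  have hsin : (Real.sin θ : ℂ) = 2*(s:ℂ)*(c:ℂ) := by rw [hsinR]; push_cast; ring
  constructor
  · rw [hG, hOα, hinnα, hψspan, hcos, hsin]
    module
  · rw [hG, hOβ, inner_neg_right, hinnβ, hψspan, hcos2, hsin]
    module
end

section
/- After r applications of the Grover operator to the initial state ψ, the state equals cos((2r+1)θ/2)·α + sin((2r+1)θ/2)·β, where θ satisfies sin(θ/2) = √(M/N). -/
open scoped ComplexInnerProductSpace in
/-- Iterating the Grover operator: if `ψ = cos(θ/2)α + sin(θ/2)β` with `α, β`
orthonormal, `sin(θ/2) = √(M/N)`, and the Grover operator `G` acts on the plane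
spanned by `(α, β)` as rotation by `θ`, then
`G^r ψ = cos((2r+1)θ/2)·α + sin((2r+1)θ/2)·β`. -/
theorem grover_iterated_state
    (N M : ℕ) (hM0 : 0 < M) (hMN : M < N)
    (E : Type*) [NormedAddCommGroup E] [InnerProductSpace ℂ E]
    (α β ψ : E) (hαβ : ⟪α, β⟫ = 0) (hα : ‖α‖ = 1) (hβ : ‖β‖ = 1)
    (θ : ℝ) (hθ : Real.sin (θ / 2) = Real.sqrt ((M : ℝ) / N))
    (hψ : ψ = (Real.cos (θ / 2) : ℂ) • α + (Real.sin (θ / 2) : ℂ) • β)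
    (G : E →ₗ[ℂ] E)
    (hGα : G α = (Real.cos θ : ℂ) • α + (Real.sin θ : ℂ) • β)
    (hGβ : G β = -(Real.sin θ : ℂ) • α + (Real.cos θ : ℂ) • β) :
    ∀ r : ℕ, (G ^ r) ψ
      = (Real.cos ((2 * r + 1) * θ / 2) : ℂ) • α
        + (Real.sin ((2 * r + 1) * θ / 2) : ℂ) • β := by
  intro r
  induction r with
  | zero =>
    simpa using hψ
  | succ n ih =>
    have : (G ^ (n+1)) ψ = G ((G ^ n) ψ) := by
      rw [pow_succ']; rfl
    rw [this, ih]
    set a := (2 * (n:ℝ) + 1) * θ / 2 with ha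
    have hnext : (2 * ((n+1 : ℕ) : ℝ) + 1) * θ / 2 = a + θ := by push_cast; ring
    rw [map_add, map_smul, map_smul, hGα, hGβ, hnext, Real.cos_add, Real.sin_add]
    push_cast
    module
end

section
/- If a polynomial p of degree at most n satisfies |p(x)| ≤ 1 for all x ∈ [-1,1], then its leading coefficient is bounded in absolute value by 2^{n-1}, the leading coefficient of the Chebyshev polynomial T_n (for n ≥ 1). -/
open Polynomial Finset Real

/-- Degree bound and leading coefficient of the Chebyshev polynomial. -/
lemma cheb_deg_coeff : ∀ n : ℕ, (Polynomial.Chebyshev.T ℝ n).natDegree ≤ n ∧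
    (Polynomial.Chebyshev.T ℝ n).coeff n = 2 ^ (n - 1) := by
  intro n
  induction n using Nat.strong_induction_on with
  | _ n ih =>
    match n with
    | 0 => simp [Polynomial.Chebyshev.T_zero]
    | 1 => simp [Polynomial.Chebyshev.T_one]
    | (m+2) =>
      obtain ⟨hd1, hc1⟩ := ih (m+1) (by omega)
      obtain ⟨hd0, hc0⟩ := ih m (by omega)
      have hrec : Polynomial.Chebyshev.T ℝ ((m:ℤ)+2)
          = 2 * X * Polynomial.Chebyshev.T ℝ ((m:ℤ)+1) - Polynomial.Chebyshev.T ℝ (m:ℤ) :=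
        Polynomial.Chebyshev.T_add_two ℝ m
      have hcast : ((m+2 : ℕ) : ℤ) = (m:ℤ) + 2 := by push_cast; ring
      have hcast1 : ((m+1 : ℕ) : ℤ) = (m:ℤ) + 1 := by push_cast; ring
      rw [hcast, hrec]
      constructor
      · refine le_trans (natDegree_sub_le _ _) ?_
        refine max_le (le_trans (natDegree_mul_le) ?_) (by omega)
        have : (2 * X : ℝ[X]).natDegree ≤ 1 :=
          le_trans (natDegree_mul_le) (by simp)
        rw [hcast1] at hd1
        omega
      · rw [hcast1] at hd1 hc1
        rw [coeff_sub, mul_assoc]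
        have h2 : ((2 : ℝ[X]) = C 2) := (map_ofNat C 2).symm
        rw [h2, coeff_C_mul, coeff_X_mul, hc1,
          coeff_eq_zero_of_natDegree_lt (lt_of_le_of_lt hd0 (by omega))]
        simp
        ring

/-- Leading coefficient of the Lagrange basis polynomial. -/
lemma coeff_basis (n : ℕ) (v : ℕ → ℝ) (hinj : Set.InjOn v (Finset.range (n+1)))
    (i : ℕ) (hi : i ∈ Finset.range (n+1)) :
    (Lagrange.basis (Finset.range (n+1)) v i).coeff n
      = ∏ j ∈ (Finset.range (n+1)).erase i, (v i - v j)⁻¹ := by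
  have hcard : #(Finset.range (n+1)) = n + 1 := Finset.card_range _
  have hnd : (Lagrange.basis (Finset.range (n+1)) v i).natDegree = n := by
    rw [Lagrange.natDegree_basis hinj hi, hcard]
    omega

  have : (Lagrange.basis (Finset.range (n+1)) v i).coeff n
      = (Lagrange.basis (Finset.range (n+1)) v i).leadingCoeff := by
    rw [leadingCoeff, hnd]
  rw [this, Lagrange.basis, leadingCoeff_prod]
  refine Finset.prod_congr rfl fun j hj => ?_
  have hij : v i ≠ v j := fun h => (Finset.ne_of_mem_erase hj).symm
    (hinj hi (Finset.mem_of_mem_erase hj) h)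
  rw [Lagrange.basisDivisor, leadingCoeff_mul, leadingCoeff_C, leadingCoeff_X_sub_C, mul_one]

/-- Lagrange interpolation formula for the `n`-th coefficient. -/
lemma coeff_eq_sum (n : ℕ) (p : Polynomial ℝ) (hdeg : p.natDegree ≤ n)
    (v : ℕ → ℝ) (hinj : Set.InjOn v (Finset.range (n+1))) :
    p.coeff n = ∑ i ∈ Finset.range (n+1),
      p.eval (v i) * ∏ j ∈ (Finset.range (n+1)).erase i, (v i - v j)⁻¹ := by
  have hcard : #(Finset.range (n+1)) = n + 1 := Finset.card_range _
  have hdlt : p.degree < (#(Finset.range (n+1)) : ℕ) := by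
    rw [hcard]
    exact lt_of_le_of_lt degree_le_natDegree (by exact_mod_cast Nat.lt_succ_of_le hdeg)
  have hp := Lagrange.eq_interpolate hinj hdlt
  conv_lhs => rw [hp]
  rw [Lagrange.interpolate_apply, finset_sum_coeff]
  exact Finset.sum_congr rfl fun i hi => by
    rw [coeff_C_mul, coeff_basis n v hinj i hi]

/-- Bound on the leading coefficient of a polynomial bounded on `[-1,1]`:
if `deg p ≤ n`, `n ≥ 1`, and `|p(x)| ≤ 1` on `[-1,1]`, then the coefficient of
`x^n` satisfies `|b_n| ≤ 2^(n-1)`, the leading coefficient of the Chebyshev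
polynomial `T_n`. -/
theorem leading_coeff_bound_of_bounded_on_Icc
    (n : ℕ) (hn : 1 ≤ n) (p : Polynomial ℝ) (hdeg : p.natDegree ≤ n)
    (hb : ∀ x ∈ Set.Icc (-1 : ℝ) 1, |p.eval x| ≤ 1) :
    |p.coeff n| ≤ 2 ^ (n - 1) := by
  have hnR : (0:ℝ) < n := by exact_mod_cast hn
  set v : ℕ → ℝ := fun k => Real.cos (k * π / n) with hv
  have hmem : ∀ k, k ≤ n → ((k:ℝ) * π / n) ∈ Set.Icc 0 π := by
    intro k hk
    constructor
    · positivity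
    · rw [div_le_iff₀ hnR]
      have : (k:ℝ) ≤ n := by exact_mod_cast hk
      nlinarith [pi_pos]
  have hanti : ∀ a b : ℕ, a < b → b ≤ n → v b < v a := by
    intro a b hab hbn
    refine Real.strictAntiOn_cos (hmem a (by omega)) (hmem b hbn) ?_
    have : (a:ℝ) < b := by exact_mod_cast hab
    have := pi_pos
    gcongr
  have hinj : Set.InjOn v (Finset.range (n+1)) := by
    intro a ha b hb' hab
    simp only [Finset.coe_range, Set.mem_Iio] at ha hb'
    have h2 := Real.injOn_cos (hmem a (by omega)) (hmem b (by omega)) hab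
    have hπ := Real.pi_ne_zero
    field_simp at h2
    exact_mod_cast h2
  set w : ℕ → ℝ := fun i => ∏ j ∈ (Finset.range (n+1)).erase i, (v i - v j)⁻¹ with hw
  have prodneg : ∀ (s : Finset ℕ) (g : ℕ → ℝ), ∏ j ∈ s, (-g j) = (-1)^(#s) * ∏ j ∈ s, g j := by
    intro s g
    rw [← Finset.prod_const, ← Finset.prod_mul_distrib]
    simp
  have hsign : ∀ i, i ≤ n → |w i| = (-1)^i * w i := by
    intro i hi
    have hsplit : (Finset.range (n+1)).erase i = Finset.range i ∪ Finset.Ico (i+1) (n+1) := by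
      ext j
      simp only [Finset.mem_erase, Finset.mem_range, Finset.mem_union, Finset.mem_Ico]
      omega
    have hdisj : Disjoint (Finset.range i) (Finset.Ico (i+1) (n+1)) := by
      simp only [Finset.disjoint_left, Finset.mem_range, Finset.mem_Ico]
      omega
    have hPpos : 0 < (-1:ℝ)^i * ∏ j ∈ (Finset.range (n+1)).erase i, (v i - v j) := by
      rw [hsplit, Finset.prod_union hdisj]
      have h1 : (-1:ℝ)^i * ∏ j ∈ Finset.range i, (v i - v j)
          = ∏ j ∈ Finset.range i, (v j - v i) := by
        have : ∀ j ∈ Finset.range i, (v j - v i) = -(v i - v j) := by intro j _; ring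
        rw [Finset.prod_congr rfl this, prodneg, Finset.card_range]
      have hpos1 : 0 < ∏ j ∈ Finset.range i, (v j - v i) := by
        refine Finset.prod_pos fun j hj => ?_
        have := hanti j i (Finset.mem_range.mp hj) hi
        linarith
      have hpos2 : 0 < ∏ j ∈ Finset.Ico (i+1) (n+1), (v i - v j) := by
        refine Finset.prod_pos fun j hj => ?_
        rw [Finset.mem_Ico] at hj
        have := hanti i j (by omega) (by omega)
        linarith
      calc 0 < (∏ j ∈ Finset.range i, (v j - v i)) * ∏ j ∈ Finset.Ico (i+1) (n+1), (v i - v j) :=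
            mul_pos hpos1 hpos2
        _ = (-1:ℝ)^i * ((∏ j ∈ Finset.range i, (v i - v j)) * ∏ j ∈ Finset.Ico (i+1) (n+1), (v i - v j)) := by
            rw [← h1]; ring
    have hwi : (-1:ℝ)^i * w i
        = ((-1:ℝ)^i * ∏ j ∈ (Finset.range (n+1)).erase i, (v i - v j))⁻¹ := by
      simp only [hw]
      rw [mul_inv, ← Finset.prod_inv_distrib]
      rw [← inv_pow, inv_neg, inv_one]
    have hnn : 0 ≤ (-1:ℝ)^i * w i := by rw [hwi]; positivity
    have : |(-1:ℝ)^i * w i| = (-1:ℝ)^i * w i := abs_of_nonneg hnn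
    rwa [abs_mul, abs_pow, abs_neg, abs_one, one_pow, one_mul] at this
  obtain ⟨hTd, hTc⟩ := cheb_deg_coeff n
  have hT : ∀ i, i ≤ n → (Polynomial.Chebyshev.T ℝ n).eval (v i) = (-1:ℝ)^i := by
    intro i hi
    have : v i = Real.cos ((i:ℝ) * π / n) := rfl
    rw [this, Polynomial.Chebyshev.T_real_cos]
    have h2 : (n:ℤ) * ((i:ℝ) * π / n) = (i:ℝ) * π := by
      push_cast
      field_simp
    rw [h2]
    have := Real.cos_nat_mul_pi_sub 0 i
    simpa using this
  have hsum : ∑ i ∈ Finset.range (n+1), |w i| = 2 ^ (n-1) := by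
    rw [← hTc, coeff_eq_sum n _ hTd v hinj]
    refine Finset.sum_congr rfl fun i hi => ?_
    rw [Finset.mem_range] at hi
    rw [hT i (by omega), hsign i (by omega)]
  rw [coeff_eq_sum n p hdeg v hinj, ← hsum]
  refine le_trans (Finset.abs_sum_le_sum_abs _ _) (Finset.sum_le_sum fun i hi => ?_)
  rw [abs_mul]
  have hv1 : v i ∈ Set.Icc (-1:ℝ) 1 := ⟨Real.neg_one_le_cos _, Real.cos_le_one _⟩
  have := hb (v i) hv1
  have hwnn : 0 ≤ |w i| := abs_nonneg _
  calc |p.eval (v i)| * |w i| ≤ 1 * |w i| := by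
        exact mul_le_mul_of_nonneg_right this hwnn
    _ = |w i| := one_mul _
end
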